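/- Let γ ∈ (0,1], let g : ℝ → ℝ be a symmetric (even) measurable function with ∫_ℝ (1+u²)|g(u)| du < ∞ and ∫_ℝ g(u) du = 1, and let φ be the characteristic function of a real random variable with ∫_ℝ |λ|^{2γ}|φ(λ)|² dλ < ∞. Then there exists a constant c > 0 (depending only on g, φ and γ) such that for all h ∈ (0,1], |∫_ℝ (ĝ(λh) − 1)·|φ(λ)|² dλ| ≤ c·h^{2γ}. -/

import Mathlib

open MeasureTheory ProbabilityTheory Filter Real

lemma auxA {γ : ℝ} (hγ : γ ∈ Set.Ioc (0:ℝ) 1) (y : ℝ) :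
    |Real.cos y - 1| ≤ 2 * |y| ^ (2 * γ) := by
  obtain ⟨hγ0, hγ1⟩ := hγ
  have h1 : |Real.cos y - 1| = 1 - Real.cos y := by
    rw [abs_sub_comm, abs_of_nonneg (by linarith [Real.cos_le_one y])]
  rw [h1]
  rcases le_or_gt 1 |y| with hy | hy
  · have : (1:ℝ) ≤ |y| ^ (2*γ) := Real.one_le_rpow hy (by linarith)
    linarith [Real.neg_one_le_cos y]
  · have h2 : 1 - Real.cos y ≤ y ^ 2 / 2 := by
      linarith [Real.one_sub_sq_div_two_le_cos (x := y)]
    rcases eq_or_ne y 0 with rfl | hy0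
    · simp only [abs_zero, Real.cos_zero, sub_self]
      positivity
    · have hylt : 0 < |y| := abs_pos.mpr hy0
      have h3 : |y| ^ (2:ℝ) ≤ |y| ^ (2*γ) :=
        Real.rpow_le_rpow_of_exponent_ge hylt hy.le (by linarith)
      have h4 : |y| ^ (2:ℝ) = y ^ 2 := by
        rw [Real.rpow_two, sq_abs]
      linarith [Real.rpow_nonneg (abs_nonneg y) (2*γ), sq_nonneg y]

lemma auxB {γ : ℝ} (hγ : γ ∈ Set.Ioc (0:ℝ) 1) (x : ℝ) :
    |x| ^ (2 * γ) ≤ 1 + x ^ 2 := by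
  obtain ⟨hγ0, hγ1⟩ := hγ
  rcases le_or_gt |x| 1 with hx | hx
  · have : |x| ^ (2*γ) ≤ 1 := Real.rpow_le_one (abs_nonneg x) hx (by linarith)
    nlinarith [sq_nonneg x]
  · have h3 : |x| ^ (2*γ) ≤ |x| ^ (2:ℝ) :=
      Real.rpow_le_rpow_of_exponent_le hx.le (by linarith)
    have h4 : |x| ^ (2:ℝ) = x ^ 2 := by rw [Real.rpow_two, sq_abs]
    nlinarith [sq_nonneg x]

lemma auxC {γ : ℝ} (hγ : γ ∈ Set.Ioc (0:ℝ) 1)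
    (g : ℝ → ℝ) (hg_meas : Measurable g) (hg_symm : ∀ x, g (-x) = g x)
    (hg_int : Integrable fun u => (1 + u ^ 2) * |g u|)
    (hg_one : (∫ u, g u) = 1)
    (gh : ℝ → ℂ) (hgh : ∀ u : ℝ, gh u = ∫ x : ℝ, Complex.exp (Complex.I * u * x) * g x)
    (u : ℝ) :
    ‖gh u - 1‖ ≤ 2 * (∫ x : ℝ, (1 + x ^ 2) * |g x|) * |u| ^ (2 * γ) := by
  have hbound : ∀ x : ℝ, |g x| ≤ (1 + x ^ 2) * |g x| := by
    intro x; nlinarith [abs_nonneg (g x), sq_nonneg x]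
  have hgint : Integrable g := by
    refine hg_int.mono' hg_meas.aestronglyMeasurable ?_
    filter_upwards with x
    simpa using hbound x
  have hcos_int : Integrable fun x => Real.cos (u * x) * g x := by
    refine hgint.abs.mono' ((Real.measurable_cos.comp (measurable_const_mul u)).mul
      hg_meas).aestronglyMeasurable ?_
    filter_upwards with x
    rw [Real.norm_eq_abs, abs_mul]
    exact mul_le_of_le_one_left (abs_nonneg _) (Real.abs_cos_le_one _)
  have hsin_int : Integrable fun x => Real.sin (u * x) * g x := by
    refine hgint.abs.mono' ((Real.measurable_sin.comp (measurable_const_mul u)).mul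
      hg_meas).aestronglyMeasurable ?_
    filter_upwards with x
    rw [Real.norm_eq_abs, abs_mul]
    exact mul_le_of_le_one_left (abs_nonneg _) (Real.abs_sin_le_one _)
  have hsin_zero : (∫ x : ℝ, Real.sin (u * x) * g x) = 0 := by
    have h1 := integral_neg_eq_self (fun x => Real.sin (u * x) * g x) (volume : Measure ℝ)
    simp only [hg_symm, mul_neg, Real.sin_neg, neg_mul, integral_neg] at h1
    linarith
  have key : gh u = ((∫ x : ℝ, Real.cos (u * x) * g x : ℝ) : ℂ) := by
    rw [hgh]
    have heq : ∀ x : ℝ, Complex.exp (Complex.I * u * x) * (g x : ℂ)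
        = ((Real.cos (u * x) * g x : ℝ) : ℂ) + ((Real.sin (u * x) * g x : ℝ) : ℂ) * Complex.I := by
      intro x
      have h3 : Complex.I * (u : ℂ) * (x : ℂ) = ((u * x : ℝ) : ℂ) * Complex.I := by
        push_cast; ring
      rw [h3, Complex.exp_mul_I, ← Complex.ofReal_cos, ← Complex.ofReal_sin]
      push_cast; ring
    calc (∫ x : ℝ, Complex.exp (Complex.I * u * x) * (g x : ℂ))
        = ∫ x : ℝ, (((Real.cos (u * x) * g x : ℝ) : ℂ)
            + ((Real.sin (u * x) * g x : ℝ) : ℂ) * Complex.I) := by simp only [heq]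
      _ = ((∫ x : ℝ, Real.cos (u * x) * g x : ℝ) : ℂ)
            + ((∫ x : ℝ, Real.sin (u * x) * g x : ℝ) : ℂ) * Complex.I := by
          have h1 := integral_add (μ := (volume : Measure ℝ)) hcos_int.ofReal
            (hsin_int.ofReal.mul_const Complex.I)
          rw [integral_mul_const, integral_ofReal, integral_ofReal] at h1
          exact h1
      _ = ((∫ x : ℝ, Real.cos (u * x) * g x : ℝ) : ℂ) := by
          rw [hsin_zero]; simp
  have keysub : gh u - 1 = ((∫ x : ℝ, (Real.cos (u * x) - 1) * g x : ℝ) : ℂ) := by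
    rw [key]
    have h4 : (∫ x : ℝ, (Real.cos (u * x) - 1) * g x)
        = (∫ x : ℝ, Real.cos (u * x) * g x) - ∫ x : ℝ, g x := by
      rw [← integral_sub hcos_int hgint]
      congr 1; ext x; ring
    rw [h4, hg_one]
    push_cast
    ring
  rw [keysub, Complex.norm_real, Real.norm_eq_abs]
  have step1 : |∫ x : ℝ, (Real.cos (u * x) - 1) * g x|
      ≤ ∫ x : ℝ, ‖(Real.cos (u * x) - 1) * g x‖ := by
    rw [← Real.norm_eq_abs]
    exact norm_integral_le_integral_norm _
  have step2 : (∫ x : ℝ, ‖(Real.cos (u * x) - 1) * g x‖)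
      ≤ ∫ x : ℝ, (2 * |u| ^ (2 * γ)) * ((1 + x ^ 2) * |g x|) := by
    refine integral_mono_of_nonneg ?_ (hg_int.const_mul _) ?_
    · filter_upwards with x using norm_nonneg _
    · filter_upwards with x
      rw [Real.norm_eq_abs, abs_mul]
      have h5 : |Real.cos (u * x) - 1| ≤ 2 * |u| ^ (2 * γ) * |x| ^ (2 * γ) := by
        have := auxA hγ (u * x)
        rwa [abs_mul, Real.mul_rpow (abs_nonneg u) (abs_nonneg x), ← mul_assoc] at this
      have h6 : |x| ^ (2 * γ) ≤ 1 + x ^ 2 := auxB hγ x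
      have h7 : (0:ℝ) ≤ |u| ^ (2 * γ) := Real.rpow_nonneg (abs_nonneg u) _
      have h8 : (0:ℝ) ≤ |x| ^ (2 * γ) := Real.rpow_nonneg (abs_nonneg x) _
      have h9 : |Real.cos (u * x) - 1| ≤ 2 * |u| ^ (2 * γ) * (1 + x ^ 2) :=
        h5.trans (mul_le_mul_of_nonneg_left h6 (by positivity))
      nlinarith [mul_le_mul_of_nonneg_right h9 (abs_nonneg (g x))]
  rw [integral_const_mul] at step2
  linarith [step1, step2, (by ring : (2 * |u| ^ (2*γ)) * (∫ x : ℝ, (1 + x ^ 2) * |g x|)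
    = 2 * (∫ x : ℝ, (1 + x ^ 2) * |g x|) * |u| ^ (2 * γ))]


theorem stmt11
    {Ω : Type*} [MeasureSpace Ω] [IsProbabilityMeasure (ℙ : Measure Ω)]
    (γ : ℝ) (hγ : γ ∈ Set.Ioc (0:ℝ) 1)
    (g : ℝ → ℝ) (hg_meas : Measurable g) (hg_symm : ∀ x, g (-x) = g x)
    (hg_int : Integrable fun u => (1 + u ^ 2) * |g u|)
    (hg_one : (∫ u, g u) = 1)
    (gh : ℝ → ℂ) (hgh : ∀ u : ℝ, gh u = ∫ x : ℝ, Complex.exp (Complex.I * u * x) * g x)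
    (Z : Ω → ℝ) (hZ_meas : Measurable Z)
    (φ : ℝ → ℂ) (hφ : ∀ l : ℝ, φ l = ∫ ω, Complex.exp (Complex.I * l * Z ω) ∂ℙ)
    (hφ_int : Integrable fun l : ℝ => |l| ^ (2 * γ) * ‖φ l‖ ^ 2) :
    ∃ c : ℝ, 0 < c ∧ ∀ t ∈ Set.Ioc (0:ℝ) 1,
      ‖∫ l : ℝ, (gh (l * t) - 1) * ((‖φ l‖ ^ 2 : ℝ) : ℂ)‖
        ≤ c * t ^ (2 * γ) := by
  set C : ℝ := ∫ x : ℝ, (1 + x ^ 2) * |g x| with hC_def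
  set I : ℝ := ∫ l : ℝ, |l| ^ (2 * γ) * ‖φ l‖ ^ 2 with hI_def
  have hC : 0 ≤ C := integral_nonneg fun x => by positivity
  have hI : 0 ≤ I := integral_nonneg fun l => by positivity
  refine ⟨2 * (C + 1) * (I + 1), by positivity, ?_⟩
  intro t ht
  obtain ⟨ht0, ht1⟩ := ht
  have htp : (0:ℝ) < t ^ (2 * γ) := Real.rpow_pos_of_pos ht0 _
  have step1 : ‖∫ l : ℝ, (gh (l * t) - 1) * ((‖φ l‖ ^ 2 : ℝ) : ℂ)‖
      ≤ ∫ l : ℝ, ‖(gh (l * t) - 1) * ((‖φ l‖ ^ 2 : ℝ) : ℂ)‖ := by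
    exact norm_integral_le_integral_norm _
  have step2 : (∫ l : ℝ, ‖(gh (l * t) - 1) * ((‖φ l‖ ^ 2 : ℝ) : ℂ)‖)
      ≤ ∫ l : ℝ, (2 * C * t ^ (2 * γ)) * (|l| ^ (2 * γ) * ‖φ l‖ ^ 2) := by
    refine integral_mono_of_nonneg ?_ (hφ_int.const_mul _) ?_
    · filter_upwards with l using norm_nonneg _
    · filter_upwards with l
      have h1 : ‖gh (l * t) - 1‖ ≤ 2 * C * |l * t| ^ (2 * γ) :=
        auxC hγ g hg_meas hg_symm hg_int hg_one gh hgh (l * t)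
      have h2 : |l * t| ^ (2 * γ) = |l| ^ (2 * γ) * t ^ (2 * γ) := by
        rw [abs_mul, abs_of_pos ht0, Real.mul_rpow (abs_nonneg l) ht0.le]
      rw [norm_mul, Complex.norm_real, Real.norm_eq_abs,
        abs_of_nonneg (by positivity : (0:ℝ) ≤ ‖φ l‖ ^ 2)]
      rw [h2] at h1
      have h3 : (0:ℝ) ≤ ‖φ l‖ ^ 2 := by positivity
      nlinarith [mul_le_mul_of_nonneg_right h1 h3, norm_nonneg (gh (l * t) - 1)]
  rw [integral_const_mul] at step2
  have : 2 * C * t ^ (2 * γ) * I ≤ 2 * (C + 1) * (I + 1) * t ^ (2 * γ) := by nlinarith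
  linarith
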